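/- For the Hilbert transform 𝕳 on the unit circle and a unit-speed unit circle parametrization z(α) = e^{iα}, the positive quantity Im [z̄, 𝕳̃] z_α equals (1/(8π)) ∫_0^{2π} |z(β) − z(α)|² csc²((β−α)/2) dβ; more generally, for any 2π-periodic C¹ curve Z, Im([Z̄, 𝕳̃] Z_α)(α) = (1/(8π)) ∫_0^{2π} |Z(β) − Z(α)|² csc²((β−α)/2) dβ > 0 (when Z is non-constant). -/

import Mathlib

/-!
Write `w(β) = Z(β) - Z(α)` and `K(β) = cot((β - α)/2)`. The real part of the commutator integrand
is `-⟪w, Z'⟫ K = -(1/2) (‖w‖²)' K`, and `K' = -(1/2) csc²((β - α)/2)`, so integrating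
`(‖w‖² K)' = (‖w‖²)' K - (1/2) ‖w‖² csc²` over a period gives the identity, because `‖w‖² K` is
periodic and continuous. Continuity at the zeros of the sine, and the integrability of every term,
come from the bound `‖w(β)‖ ≤ π M |sin((β - α)/2)|` (with `M` a bound for `‖Z'‖`), which follows
from the mean value theorem and Jordan's inequality `|x| ≤ π |sin(x/2)|` for `|x| ≤ π`.
Positivity holds because `‖w‖² csc²` is positive on the open set where `Z ≠ Z(α)`.
-/

open MeasureTheory Filter Function Set Real Topology
open scoped InnerProductSpace

theorem Function.Periodic.deriv {E : Type*} [NormedAddCommGroup E] [NormedSpace ℝ E]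
    {f : ℝ → E} {c : ℝ} (h : Periodic f c) : Periodic (deriv f) c := fun x => by
  rw [← deriv_comp_add_const, h.funext]

theorem abs_le_pi_mul_abs_sin_half {x : ℝ} (hx : |x| ≤ π) : |x| ≤ π * |sin (x / 2)| := by
  have h := mul_abs_le_abs_sin (x := x / 2) (by rw [abs_div, abs_two]; linarith)
  rw [abs_div, abs_two] at h
  rw [← div_le_iff₀' pi_pos]
  calc |x| / π = 2 / π * (|x| / 2) := by ring
    _ ≤ _ := h

theorem norm_sub_le_pi_mul_abs_sin_half {E : Type*} [NormedAddCommGroup E] [NormedSpace ℝ E]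
    {f : ℝ → E} {M : ℝ} (hf : Differentiable ℝ f) (hper : Periodic f (2 * π))
    (hM : ∀ x, ‖deriv f x‖ ≤ M) (α β : ℝ) :
    ‖f β - f α‖ ≤ π * M * |sin ((β - α) / 2)| := by
  -- `|sin((x - α)/2)|` is `2π`-periodic too, so `β` may be moved into `[α - π, α + π)`
  have hpair : Periodic (fun x => (f x, |sin ((x - α) / 2)|)) (2 * π) := fun x => by
    simp only [hper x, add_sub_right_comm, add_div, mul_div_cancel_left₀ π two_ne_zero,
      sin_add_pi, abs_neg]
  obtain ⟨y, hy, hβy⟩ := hpair.exists_mem_Ico two_pi_pos β (α - π)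
  obtain ⟨hfy, hsy⟩ := Prod.mk.inj hβy
  have hM₀ : 0 ≤ M := (norm_nonneg _).trans (hM 0)
  have hyα : |y - α| ≤ π := abs_le.mpr ⟨by linarith [hy.1], by linarith [hy.2]⟩
  calc ‖f β - f α‖ = ‖f y - f α‖ := by rw [hfy]
    _ ≤ M * ‖y - α‖ := convex_univ.norm_image_sub_le_of_norm_deriv_le (fun x _ => hf x)
        (fun x _ => hM x) trivial trivial
    _ ≤ M * (π * |sin ((y - α) / 2)|) := by
        gcongr; exact abs_le_pi_mul_abs_sin_half hyα
    _ = π * M * |sin ((β - α) / 2)| := by rw [hsy]; ring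

theorem Function.Periodic.eq_const_of_eqOn_Ioo {X : Type*} [TopologicalSpace X] [T2Space X]
    {f : ℝ → X} {c a : ℝ} {y : X} (hf : Periodic f c) (hc : 0 < c) (hcont : Continuous f)
    (h : EqOn f (fun _ => y) (Ioo a (a + c))) : f = fun _ => y := by
  have hIcc : EqOn f (fun _ => y) (Icc a (a + c)) := by
    simpa [closure_Ioo (by linarith : a ≠ a + c)] using h.closure hcont continuous_const
  funext x
  obtain ⟨z, hz, hxz⟩ := hf.exists_mem_Ico hc x a
  rw [hxz]
  exact hIcc (Ico_subset_Icc_self hz)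

theorem intervalIntegrable_of_norm_le {E : Type*} [NormedAddCommGroup E] {f : ℝ → E} {C : ℝ}
    (hf : AEStronglyMeasurable f volume) (h : ∀ x, ‖f x‖ ≤ C) (a b : ℝ) :
    IntervalIntegrable f volume a b :=
  intervalIntegrable_const.mono_fun' hf.restrict (ae_of_all _ h)

theorem hasDerivAt_cot_half_sub {α β : ℝ} (hs : sin ((β - α) / 2) ≠ 0) :
    HasDerivAt (fun x => cos ((x - α) / 2) / sin ((x - α) / 2))
      (-(1 / 2) * ((sin ((β - α) / 2))⁻¹) ^ 2) β := by
  have hi : HasDerivAt (fun x : ℝ => (x - α) / 2) (1 / 2) β := by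
    simpa using ((hasDerivAt_id β).sub_const α).div_const 2
  refine (((hasDerivAt_cos _).comp β hi).div ((hasDerivAt_sin _).comp β hi) hs).congr_deriv ?_
  simp only [comp_apply]
  field_simp
  linear_combination -sin_sq_add_cos_sq ((β - α) / 2)

theorem periodic_cot_half_sub (α : ℝ) :
    Periodic (fun x => cos ((x - α) / 2) / sin ((x - α) / 2)) (2 * π) := fun x => by
  simp only [add_sub_right_comm, add_div, mul_div_cancel_left₀ π two_ne_zero, sin_add_pi,
    cos_add_pi, neg_div_neg_eq]

theorem countable_setOf_sin_half_sub_eq_zero (α : ℝ) :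
    {x : ℝ | sin ((x - α) / 2) = 0}.Countable := by
  refine (countable_range fun n : ℤ => α + 2 * n * π).mono fun x hx => ?_
  obtain ⟨n, hn⟩ := sin_eq_zero_iff.mp hx
  exact ⟨n, by linarith⟩

section CotangentKernel

variable {Z : ℝ → ℂ} {α C M : ℝ}

theorem norm_sub_mul_norm_deriv_mul_abs_cot_le (hC : 0 ≤ C)
    (hw : ∀ β, ‖Z β - Z α‖ ≤ C * |sin ((β - α) / 2)|) (hM : ∀ β, ‖deriv Z β‖ ≤ M) (β : ℝ) :
    ‖Z β - Z α‖ * ‖deriv Z β‖ * |cos ((β - α) / 2) / sin ((β - α) / 2)| ≤ C * M := by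
  have hM₀ : 0 ≤ M := (norm_nonneg _).trans (hM β)
  calc ‖Z β - Z α‖ * ‖deriv Z β‖ * |cos ((β - α) / 2) / sin ((β - α) / 2)|
      = ‖Z β - Z α‖ / |sin ((β - α) / 2)| * ‖deriv Z β‖ * |cos ((β - α) / 2)| := by
        rw [abs_div]; ring
    _ ≤ C * M * 1 := by
        gcongr
        · exact div_le_of_le_mul₀ (abs_nonneg _) hC (hw β)
        · exact hM β
        · exact abs_cos_le_one _
    _ = C * M := mul_one _

theorem norm_sub_sq_mul_inv_sin_sq_le (hC : 0 ≤ C)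
    (hw : ∀ β, ‖Z β - Z α‖ ≤ C * |sin ((β - α) / 2)|) (β : ℝ) :
    ‖Z β - Z α‖ ^ 2 * ((sin ((β - α) / 2))⁻¹) ^ 2 ≤ C ^ 2 := by
  calc ‖Z β - Z α‖ ^ 2 * ((sin ((β - α) / 2))⁻¹) ^ 2
      = (‖Z β - Z α‖ / |sin ((β - α) / 2)|) ^ 2 := by
        rw [div_pow, sq_abs, inv_pow, ← div_eq_mul_inv]
    _ ≤ C ^ 2 := by
        gcongr
        exact div_le_of_le_mul₀ (abs_nonneg _) hC (hw β)

theorem abs_norm_sub_sq_mul_cot_le (hC : 0 ≤ C)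
    (hw : ∀ β, ‖Z β - Z α‖ ≤ C * |sin ((β - α) / 2)|) (β : ℝ) :
    |‖Z β - Z α‖ ^ 2 * (cos ((β - α) / 2) / sin ((β - α) / 2))| ≤ C * ‖Z β - Z α‖ := by
  calc |‖Z β - Z α‖ ^ 2 * (cos ((β - α) / 2) / sin ((β - α) / 2))|
      = ‖Z β - Z α‖ / |sin ((β - α) / 2)| * ‖Z β - Z α‖ * |cos ((β - α) / 2)| := by
        rw [abs_mul, abs_div, abs_pow, abs_norm]; ring
    _ ≤ C * ‖Z β - Z α‖ * 1 := by
        gcongr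
        · exact div_le_of_le_mul₀ (abs_nonneg _) hC (hw β)
        · exact abs_cos_le_one _
    _ = C * ‖Z β - Z α‖ := mul_one _

theorem intervalIntegrable_norm_sub_sq_mul_inv_sin_sq (hZ : Continuous Z) (hC : 0 ≤ C)
    (hw : ∀ β, ‖Z β - Z α‖ ≤ C * |sin ((β - α) / 2)|) (a b : ℝ) :
    IntervalIntegrable (fun β => ‖Z β - Z α‖ ^ 2 * ((sin ((β - α) / 2))⁻¹) ^ 2) volume a b := by
  refine intervalIntegrable_of_norm_le (C := C ^ 2) ?_ (fun β => ?_) a b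
  · have := hZ.measurable
    exact Measurable.aestronglyMeasurable (by fun_prop)
  · rw [Real.norm_of_nonneg (by positivity)]
    exact norm_sub_sq_mul_inv_sin_sq_le hC hw β

theorem continuous_norm_sub_sq_mul_cot (hZ : Continuous Z) (hC : 0 ≤ C)
    (hw : ∀ β, ‖Z β - Z α‖ ≤ C * |sin ((β - α) / 2)|) :
    Continuous fun β => ‖Z β - Z α‖ ^ 2 * (cos ((β - α) / 2) / sin ((β - α) / 2)) := by
  refine continuous_iff_continuousAt.mpr fun β => ?_
  by_cases hs : sin ((β - α) / 2) = 0
  · have hZβ : Z β = Z α := by simpa [hs, sub_eq_zero] using hw β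
    have hlim : Tendsto (fun x => C * ‖Z x - Z α‖) (𝓝 β) (𝓝 0) := by
      simpa [hZβ] using ((hZ.sub (continuous_const (y := Z α))).norm.const_mul C).tendsto β
    simpa [ContinuousAt, hZβ] using
      squeeze_zero_norm (fun x => (abs_norm_sub_sq_mul_cot_le hC hw x)) hlim
  · exact ((hZ.sub continuous_const).norm.pow 2).continuousAt.mul
      (ContinuousAt.div (by fun_prop) (by fun_prop) hs)

theorem re_integral_commutator_integrand (hZ : Continuous Z) (hC : 0 ≤ C)
    (hw : ∀ β, ‖Z β - Z α‖ ≤ C * |sin ((β - α) / 2)|) (hM : ∀ β, ‖deriv Z β‖ ≤ M) (a b : ℝ) :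
    (∫ β in a..b, ((starRingEnd ℂ) (Z α) - (starRingEnd ℂ) (Z β)) * deriv Z β *
        ((cos ((β - α) / 2) / sin ((β - α) / 2) : ℝ) : ℂ)).re
      = -∫ β in a..b, ⟪Z β - Z α, deriv Z β⟫_ℝ * (cos ((β - α) / 2) / sin ((β - α) / 2)) := by
  have hF : IntervalIntegrable (fun β => ((starRingEnd ℂ) (Z α) - (starRingEnd ℂ) (Z β)) *
      deriv Z β * ((cos ((β - α) / 2) / sin ((β - α) / 2) : ℝ) : ℂ)) volume a b := by
    refine intervalIntegrable_of_norm_le (C := C * M) ?_ (fun β => ?_) a b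
    · have := measurable_deriv Z
      have := hZ.measurable
      exact Measurable.aestronglyMeasurable (by fun_prop)
    · rw [norm_mul, norm_mul, ← map_sub, RCLike.norm_conj, norm_sub_rev, Complex.norm_real,
        Real.norm_eq_abs]
      exact norm_sub_mul_norm_deriv_mul_abs_cot_le hC hw hM β
  have hre := intervalIntegral.intervalIntegral_re hF
  simp only [RCLike.re_to_complex] at hre
  rw [← hre, ← intervalIntegral.integral_neg]
  refine intervalIntegral.integral_congr fun β _ => ?_
  simp only [Complex.re_mul_ofReal, Complex.inner, ← map_sub]
  rw [← neg_sub, map_neg, neg_mul, Complex.neg_re, mul_comm (starRingEnd ℂ _)]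
  ring

theorem integral_inner_deriv_mul_cot (hZ : Differentiable ℝ Z) (hper : Periodic Z (2 * π))
    (hC : 0 ≤ C) (hw : ∀ β, ‖Z β - Z α‖ ≤ C * |sin ((β - α) / 2)|)
    (hM : ∀ β, ‖deriv Z β‖ ≤ M) :
    ∫ β in (0 : ℝ)..2 * π, ⟪Z β - Z α, deriv Z β⟫_ℝ * (cos ((β - α) / 2) / sin ((β - α) / 2))
      = (1 / 4) * ∫ β in (0 : ℝ)..2 * π, ‖Z β - Z α‖ ^ 2 * ((sin ((β - α) / 2))⁻¹) ^ 2 := by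
  have hA : IntervalIntegrable (fun β => ⟪Z β - Z α, deriv Z β⟫_ℝ *
      (cos ((β - α) / 2) / sin ((β - α) / 2))) volume 0 (2 * π) := by
    refine intervalIntegrable_of_norm_le (C := C * M) ?_ (fun β => ?_) _ _
    · have := measurable_deriv Z
      have := hZ.continuous.measurable
      exact Measurable.aestronglyMeasurable (by fun_prop)
    · rw [norm_mul, Real.norm_eq_abs, Real.norm_eq_abs]
      exact (mul_le_mul_of_nonneg_right (abs_real_inner_le_norm _ _) (abs_nonneg _)).trans
        (norm_sub_mul_norm_deriv_mul_abs_cot_le hC hw hM β)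
  have hB := intervalIntegrable_norm_sub_sq_mul_inv_sin_sq hZ.continuous hC hw 0 (2 * π)
  -- `‖Z - Z α‖² cot((· - α)/2)` is continuous and periodic, so its derivative integrates to zero
  have hFTC := integral_eq_of_hasDerivAt_off_countable_of_le
    (fun β => ‖Z β - Z α‖ ^ 2 * (cos ((β - α) / 2) / sin ((β - α) / 2)))
    (fun β => 2 * (⟪Z β - Z α, deriv Z β⟫_ℝ * (cos ((β - α) / 2) / sin ((β - α) / 2)))
      - 1 / 2 * (‖Z β - Z α‖ ^ 2 * ((sin ((β - α) / 2))⁻¹) ^ 2))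
    two_pi_pos.le (countable_setOf_sin_half_sub_eq_zero α)
    (continuous_norm_sub_sq_mul_cot hZ.continuous hC hw).continuousOn
    (fun β hβ => (((hZ β).hasDerivAt.sub_const (Z α)).norm_sq.mul
      (hasDerivAt_cot_half_sub hβ.2)).congr_deriv (by ring))
    ((hA.const_mul 2).sub (hB.const_mul _))
  have hper₀ := hper 0
  have hcot₀ := periodic_cot_half_sub α 0
  simp only [zero_add] at hper₀ hcot₀
  rw [hper₀, hcot₀, sub_self, intervalIntegral.integral_sub (hA.const_mul 2) (hB.const_mul _),
    intervalIntegral.integral_const_mul, intervalIntegral.integral_const_mul] at hFTC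
  linarith

theorem integral_norm_sub_sq_mul_inv_sin_sq_pos (hZ : Continuous Z) (hper : Periodic Z (2 * π))
    (hC : 0 ≤ C) (hw : ∀ β, ‖Z β - Z α‖ ≤ C * |sin ((β - α) / 2)|) (hne : ∃ a b, Z a ≠ Z b) :
    0 < ∫ β in (0 : ℝ)..2 * π, ‖Z β - Z α‖ ^ 2 * ((sin ((β - α) / 2))⁻¹) ^ 2 := by
  have hB := intervalIntegrable_norm_sub_sq_mul_inv_sin_sq hZ hC hw 0 (2 * π)
  have hU : ({β | Z β ≠ Z α} ∩ Ioo 0 (2 * π)).Nonempty := by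
    by_contra hU
    obtain ⟨a, b, hab⟩ := hne
    have hconst := hper.eq_const_of_eqOn_Ioo two_pi_pos hZ (a := 0) (y := Z α)
      fun x hx => by_contra fun h => hU ⟨x, h, by simpa using hx⟩
    rw [hconst] at hab
    exact hab rfl
  rw [intervalIntegral.integral_pos_iff_support_of_nonneg_ae' (ae_of_all _ fun β => by positivity)
    hB]
  refine ⟨two_pi_pos, ((((isOpen_ne_fun hZ continuous_const).inter isOpen_Ioo).measure_pos
    volume hU).trans_le (measure_mono ?_))⟩
  rintro β ⟨hβ, hβI⟩
  have hs : sin ((β - α) / 2) ≠ 0 := fun hs => hβ (by simpa [hs, sub_eq_zero] using hw β)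
  exact ⟨mul_ne_zero (pow_ne_zero _ (norm_ne_zero_iff.mpr (sub_ne_zero.mpr hβ)))
    (pow_ne_zero _ (inv_ne_zero hs)), Ioo_subset_Ioc_self hβI⟩

end CotangentKernel

/-- For any 2π-periodic C¹ curve `Z`, the imaginary part of the commutator
`[Z̄, 𝕳̃] Z_α` (whose combined kernel is
`(1/(2πi))(Z̄(α) − Z̄(β)) Z_β(β) cot((β−α)/2)`, a bounded integrand) equals
`(1/(8π)) ∫₀^{2π} |Z(β) − Z(α)|² csc²((β−α)/2) dβ`, which is positive when `Z`
is non-constant. -/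
theorem commutator_positivity
    (Z : ℝ → ℂ) (hZ : ContDiff ℝ 1 Z) (hper : Function.Periodic Z (2*Real.pi)) :
    ∀ α : ℝ,
      (((2*(Real.pi : ℂ)) * Complex.I)⁻¹ *
          ∫ β in (0:ℝ)..(2*Real.pi),
            ((starRingEnd ℂ) (Z α) - (starRingEnd ℂ) (Z β)) * deriv Z β *
              ((Real.cos ((β - α)/2) / Real.sin ((β - α)/2) : ℝ) : ℂ)).im
        = (1/(8*Real.pi)) * ∫ β in (0:ℝ)..(2*Real.pi),
            (‖Z β - Z α‖)^2 * ((Real.sin ((β - α)/2))⁻¹)^2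
      ∧ ((∃ a b : ℝ, Z a ≠ Z b) →
          0 < (1/(8*Real.pi)) * ∫ β in (0:ℝ)..(2*Real.pi),
            (‖Z β - Z α‖)^2 * ((Real.sin ((β - α)/2))⁻¹)^2) := by
  intro α
  have hZd : Differentiable ℝ Z := hZ.differentiable one_ne_zero
  obtain ⟨M, hM⟩ := (hper.deriv.isBounded_of_continuous two_pi_pos.ne'
    (hZ.continuous_deriv le_rfl)).exists_norm_le
  replace hM : ∀ x, ‖deriv Z x‖ ≤ M := fun x => hM _ (mem_range_self x)
  have hC : 0 ≤ π * M := mul_nonneg pi_pos.le ((norm_nonneg _).trans (hM 0))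
  have hw := norm_sub_le_pi_mul_abs_sin_half hZd hper hM α
  refine ⟨?_, fun hne => mul_pos (by positivity)
    (integral_norm_sub_sq_mul_inv_sin_sq_pos hZ.continuous hper hC hw hne)⟩
  have him : ∀ W : ℂ, ((2 * (π : ℂ) * Complex.I)⁻¹ * W).im = -(2 * π)⁻¹ * W.re := fun W => by
    simp [Complex.mul_im]
  rw [him, re_integral_commutator_integrand hZ.continuous hC hw hM,
    integral_inner_deriv_mul_cot hZd hper hC hw hM]
  field_simp
  ring
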